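/- arXiv:math-ph/0307053 — 3 statements merged into one kernel-verified Lean document; each statement's English description precedes it below -/
import Mathlib

section
/- Let X be a Hilbert space, a = h - μq with h, q commuting selfadjoint operators, q² = 1, h ≥ m > 0, |μ| < m, and κ a conjugation on X commuting with h. Then the set E = span_ℝ { e^{it(h-μq)} x : t ∈ ℝ, x ∈ X_κ } is dense in X, where X_κ = {x : κx = x}. -/
open Complex ComplexConjugate
open scoped ComplexInnerProductSpace

/-!
The closed real span of the orbits contains every `κ`-fixed vector `x` (take `t = 0`) and also
`i(h - μq)x`, the derivative at `t = 0` of `t ↦ e^{it(h - μq)}x`. So it suffices to write any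
vector as `x₁ + i(h - μq)x₂` with `x₁, x₂` fixed by `κ`. Coercivity makes `h` invertible with
`‖h⁻¹‖ ≤ m⁻¹`, and `h⁻¹` commutes with `κ`. Take `x₁ = (y + κy)/2` and
`x₂ = -(i/2) h⁻¹(y - κy)`. These work exactly when `y - r y = x` for the real-linear map
`r = ½ μ q h⁻¹(1 - κ)`. Since `‖r‖ ≤ |μ|/m < 1`, the Neumann series inverts `1 - r`.
-/

theorem ContinuousLinearMap.exists_sub_apply_eq_of_norm_lt_one {𝕜 E : Type*}
    [NontriviallyNormedField 𝕜] [NormedAddCommGroup E] [NormedSpace 𝕜 E] [CompleteSpace E]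
    (r : E →L[𝕜] E) (hr : ‖r‖ < 1) (x : E) : ∃ y, y - r y = x :=
  ⟨(↑(Units.oneSub r hr)⁻¹ : E →L[𝕜] E) x, by
    simpa [Units.val_oneSub] using congr($((Units.oneSub r hr).mul_inv) x)⟩

section Coercive

variable {𝕜 E : Type*} [RCLike 𝕜] [NormedAddCommGroup E] [InnerProductSpace 𝕜 E]
  [CompleteSpace E]

theorem ContinuousLinearMap.exists_inverse_of_coercive (T : E →L[𝕜] E) {m : ℝ} (hm : 0 < m)
    (hT : ∀ x, m * ‖x‖ ^ 2 ≤ RCLike.re (inner 𝕜 x (T x))) :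
    ∃ g : E →L[𝕜] E, (∀ v, T (g v) = v) ∧ (∀ v, g (T v) = v) ∧ ‖g‖ ≤ m⁻¹ := by
  have hinner : ∀ x, m * ‖x‖ ^ 2 ≤ ‖inner 𝕜 x (T x)‖ := fun x => (hT x).trans (RCLike.re_le_norm _)
  have hnorm : ∀ x, m * ‖x‖ ^ 2 ≤ ‖x‖ * ‖T x‖ := fun x =>
    (hinner x).trans (norm_inner_le_norm x (T x))
  obtain ⟨u, rfl⟩ := T.isUnit_of_forall_le_norm_inner_map (c := ⟨m, hm.le⟩) hm fun x => by
    rw [norm_inner_symm, mul_comm]; exact hinner x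
  set g : E →L[𝕜] E := ↑u⁻¹
  have hug : ∀ v, (u : E →L[𝕜] E) (g v) = v := fun v => congr($u.mul_inv v)
  refine ⟨g, hug, fun v => congr($u.inv_mul v),
    ContinuousLinearMap.opNorm_le_bound _ (by positivity) fun v => ?_⟩
  have := hnorm (g v)
  rw [hug] at this
  rw [le_inv_mul_iff₀ hm]
  nlinarith [norm_nonneg (g v), norm_nonneg v]

theorem ContinuousLinearMap.norm_le_one_of_isSelfAdjoint_of_mul_self_eq_one {q : E →L[𝕜] E}
    (hq : IsSelfAdjoint q) (hq2 : q * q = 1) : ‖q‖ ≤ 1 := by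
  have hmem : q ∈ unitary (E →L[𝕜] E) := by
    rw [Unitary.mem_iff, hq.star_eq, hq2]; exact ⟨rfl, rfl⟩
  exact q.opNorm_le_bound zero_le_one fun x => by rw [q.norm_map_of_mem_unitary hmem, one_mul]

end Coercive

section ComplexNormed

variable {X : Type*} [NormedAddCommGroup X] [NormedSpace ℂ X]

def LinearIsometry.ofConjLinear (κ : X → X) (hadd : ∀ x y, κ (x + y) = κ x + κ y)
    (hsmul : ∀ (c : ℂ) (x : X), κ (c • x) = conj c • κ x) (hnorm : ∀ x, ‖κ x‖ = ‖x‖) :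
    X →ₗᵢ[ℝ] X where
  toFun := κ
  map_add' := hadd
  map_smul' t x := by simp only [← coe_smul, hsmul, conj_ofReal, RingHom.id_apply]
  norm_map' := hnorm

theorem I_smul_apply_mem_of_forall_exp_mem [CompleteSpace X] {M : Submodule ℝ X}
    (hM : IsClosed (M : Set X)) (A : X →L[ℂ] X) {v : X}
    (hv : ∀ t : ℝ, NormedSpace.exp ((I * t) • A) v ∈ M) : I • A v ∈ M := by
  have hsmul : ∀ t : ℝ, t • (I • A) = (I * t) • A := fun t => by
    rw [← coe_smul, smul_smul, mul_comm]
  have hderiv : HasDerivAt (fun t : ℝ => NormedSpace.exp ((I * t) • A) v) (I • A v) 0 := by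
    have := ((ContinuousLinearMap.apply ℂ X v).restrictScalars ℝ).hasFDerivAt.comp_hasDerivAt _
      (hasDerivAt_exp_smul_const (𝕂 := ℝ) (I • A) 0)
    simpa [hsmul, Function.comp_def] using this
  refine hM.mem_of_tendsto (hasDerivAt_iff_tendsto_slope.mp hderiv)
    (Filter.Eventually.of_forall fun t => ?_)
  rw [slope_def_module]
  exact M.smul_mem _ (M.sub_mem (hv t) (hv 0))

theorem exists_fixed_add_I_smul_sub_apply_eq [CompleteSpace X] (K : X →ₗᵢ[ℝ] X)
    (hKK : ∀ x, K (K x) = x) (hKsmul : ∀ (c : ℂ) (x : X), K (c • x) = conj c • K x)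
    (h g p : X →L[ℂ] X) (hhg : ∀ v, h (g v) = v) (hKg : ∀ v, K (g v) = g (K v))
    (hp : ‖p‖ * ‖g‖ < 1) (x : X) :
    ∃ x₁ x₂, K x₁ = x₁ ∧ K x₂ = x₂ ∧ x₁ + I • (h - p) x₂ = x := by
  set r : X →L[ℝ] X := (2⁻¹ : ℝ) •
    ((p ∘L g).restrictScalars ℝ ∘L (ContinuousLinearMap.id ℝ X - K.toContinuousLinearMap))
  have hr : ‖r‖ < 1 := by
    have h1K : ‖ContinuousLinearMap.id ℝ X - K.toContinuousLinearMap‖ ≤ 2 :=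
      (norm_sub_le _ _).trans (by linarith [ContinuousLinearMap.norm_id_le (𝕜 := ℝ) (E := X),
        K.norm_toContinuousLinearMap_le])
    calc ‖r‖ ≤ 2⁻¹ * (‖p ∘L g‖ * ‖ContinuousLinearMap.id ℝ X - K.toContinuousLinearMap‖) := by
          rw [norm_smul, Real.norm_of_nonneg (by norm_num)]
          gcongr
          exact (ContinuousLinearMap.opNorm_comp_le _ _).trans_eq
            (by rw [ContinuousLinearMap.norm_restrictScalars])
      _ ≤ 2⁻¹ * (‖p‖ * ‖g‖ * 2) := by gcongr; exact p.opNorm_comp_le g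
      _ < 1 := by linarith
  obtain ⟨y, hy⟩ := r.exists_sub_apply_eq_of_norm_lt_one hr x
  set w := g (y - K y)
  have hKw : K w = -w := by rw [hKg, map_sub, hKK, ← map_neg, neg_sub]
  refine ⟨(2⁻¹ : ℝ) • (y + K y), -(I / 2) • w, ?_, ?_, ?_⟩
  · rw [map_smul, map_add, hKK, add_comm]
  · rw [hKsmul, hKw, smul_neg, ← neg_smul, map_neg, map_div₀, conj_I, map_ofNat, neg_div, neg_neg]
  · have hry : r y = (2⁻¹ : ℝ) • p w := rfl
    have hc : I * -(I / 2) = ((2⁻¹ : ℝ) : ℂ) := by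
      rw [mul_neg, mul_div_assoc', I_mul_I]; push_cast; ring
    rw [← hy, hry, map_smul, sub_apply, hhg, smul_smul, hc, coe_smul]
    module

end ComplexNormed

theorem norm_apply_eq_of_inner_apply_eq_conj {X : Type*} [NormedAddCommGroup X]
    [InnerProductSpace ℂ X] {κ : X → X} (hκ : ∀ x y, ⟪κ x, κ y⟫ = conj ⟪x, y⟫) (x : X) :
    ‖κ x‖ = ‖x‖ := by
  rw [norm_eq_sqrt_re_inner (𝕜 := ℂ), hκ, RCLike.conj_re, ← norm_eq_sqrt_re_inner]

theorem density_of_time_translates_general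
    {X : Type*} [NormedAddCommGroup X] [InnerProductSpace ℂ X] [CompleteSpace X]
    (m μ : ℝ) (hm : 0 < m) (hμ : |μ| < m)
    (h q : X →L[ℂ] X)
    (hqsa : IsSelfAdjoint q)
    (hq2 : q * q = 1)
    (hbound : ∀ x : X, m * ‖x‖ ^ 2 ≤ (⟪x, h x⟫).re)
    -- the conjugation κ, commuting with h
    (κ : X → X)
    (hκadd : ∀ x y : X, κ (x + y) = κ x + κ y)
    (hκsmul : ∀ (c : ℂ) (x : X), κ (c • x) = (starRingEnd ℂ) c • κ x)
    (hκinv : ∀ x : X, κ (κ x) = x)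
    (hκinner : ∀ x y : X, ⟪κ x, κ y⟫ = (starRingEnd ℂ) ⟪x, y⟫)
    (hκh : ∀ x : X, κ (h x) = h (κ x)) :
    Dense (Submodule.span ℝ
      {y : X | ∃ (t : ℝ) (x : X), κ x = x ∧
        y = NormedSpace.exp ((Complex.I * t) • (h - μ • q)) x} : Set X) := by
  set E := Submodule.span ℝ {y : X | ∃ (t : ℝ) (x : X), κ x = x ∧
    y = NormedSpace.exp ((Complex.I * t) • (h - μ • q)) x}
  have hfix : ∀ v, κ v = v → v ∈ E.topologicalClosure := fun v hv =>
    E.le_topologicalClosure (Submodule.subset_span ⟨0, v, hv, by simp⟩)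
  have hgen : ∀ v, κ v = v → I • (h - μ • q) v ∈ E.topologicalClosure := fun v hv =>
    I_smul_apply_mem_of_forall_exp_mem E.isClosed_topologicalClosure _ fun t =>
      E.le_topologicalClosure (Submodule.subset_span ⟨t, v, hv, rfl⟩)
  obtain ⟨g, hhg, hgh, hg⟩ := h.exists_inverse_of_coercive hm hbound
  have hκg : ∀ v, κ (g v) = g (κ v) := fun v => by rw [← hgh (κ (g v)), ← hκh, hhg]
  have hp : ‖μ • q‖ * ‖g‖ < 1 := by
    have hq := ContinuousLinearMap.norm_le_one_of_isSelfAdjoint_of_mul_self_eq_one hqsa hq2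
    calc ‖μ • q‖ * ‖g‖ ≤ |μ| * (1 * m⁻¹) := by
          rw [norm_smul, Real.norm_eq_abs, mul_assoc]; gcongr
      _ < 1 := by rwa [one_mul, ← div_eq_mul_inv, div_lt_one hm]
  let K := LinearIsometry.ofConjLinear κ hκadd hκsmul (norm_apply_eq_of_inner_apply_eq_conj hκinner)
  suffices E.topologicalClosure = ⊤ by
    rw [dense_iff_closure_eq, ← Submodule.topologicalClosure_coe, this, Submodule.top_coe]
  refine Submodule.eq_top_iff'.mpr fun x => ?_
  obtain ⟨x₁, x₂, h₁, h₂, rfl⟩ :=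
    exists_fixed_add_I_smul_sub_apply_eq K hκinv hκsmul h g (μ • q) hhg hκg hp x
  exact add_mem (hfix x₁ h₁) (hgen x₂ h₂)

/-- For commuting selfadjoint `h, q` with `q² = 1`, `h ≥ m > 0`, `|μ| < m`,
and a conjugation `κ` commuting with `h`, the real span of
`{ e^{it(h-μq)} x : t ∈ ℝ, κ x = x }` is dense in `X`. -/
theorem density_of_time_translates
    {X : Type*} [NormedAddCommGroup X] [InnerProductSpace ℂ X] [CompleteSpace X]
    (m μ : ℝ) (hm : 0 < m) (hμ : |μ| < m)
    (h q : X →L[ℂ] X)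
    (hh : IsSelfAdjoint h) (hqsa : IsSelfAdjoint q)
    (hcomm : Commute h q) (hq2 : q * q = 1)
    (hbound : ∀ x : X, m * ‖x‖ ^ 2 ≤ (⟪x, h x⟫).re)
    -- the conjugation κ, commuting with h
    (κ : X → X)
    (hκadd : ∀ x y : X, κ (x + y) = κ x + κ y)
    (hκsmul : ∀ (c : ℂ) (x : X), κ (c • x) = (starRingEnd ℂ) c • κ x)
    (hκinv : ∀ x : X, κ (κ x) = x)
    (hκinner : ∀ x y : X, ⟪κ x, κ y⟫ = (starRingEnd ℂ) ⟪x, y⟫)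
    (hκh : ∀ x : X, κ (h x) = h (κ x)) :
    Dense (Submodule.span ℝ
      {y : X | ∃ (t : ℝ) (x : X), κ x = x ∧
        y = NormedSpace.exp ((Complex.I * t) • (h - μ • q)) x} : Set X) :=
  density_of_time_translates_general m μ hm hμ h q hqsa hq2 hbound κ hκadd hκsmul hκinv hκinner hκh
end

section
/- Let (Q, Σ, μ) be a probability space, U(t) a one-parameter group of measure-preserving *-automorphisms of L^∞(Q,Σ,μ), V a real Σ₀-measurable function with e^{-βV} ∈ L¹. Assume the Klein–Landau bound ‖e^{-∫_a^b U(t)V dt}‖_{L^p} ≤ ‖e^{-(b-a)V}‖_{L^p}. If e^{-βV_-} ∈ L¹(Q,Σ₀,μ) (V_- the negative part of V), then F_{[0,s]} := e^{-∫₀^s U(t)V dt} belongs to L²(Q,Σ,μ) for 0 ≤ s ≤ β/2, with ‖F_{[0,s]}‖₂² ≤ ‖e^{βV_-}‖_{L¹}, and s ↦ F_{[0,s]} is continuous in L²(Q,Σ,μ). -/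
/-!
Write `W = max (-V) 0` and `c = β / 2`. On `[0, c]` the kernel is dominated by
`G = exp (∫₀^c W(T_t ω) dt)`, and Jensen's inequality for the time average gives
`G² = exp (c⁻¹ ∫₀^c β W(T_t ω) dt) ≤ c⁻¹ ∫₀^c exp (β W(T_t ω)) dt`, whose `μ`-integral is
`∫ exp (β W) dμ` because every `T_t` preserves `μ`. This is the `L²` bound, and continuity follows
by dominated convergence once `s ↦ F s ω` is continuous at `s₀` for almost every `ω`. It can only
fail when `s₀ > 0` is the explosion time of `t ↦ V (T_t ω)`, beyond which the integral takes its
junk value `0`. Shifting along the flow, the set of `ω` exploding at `s₀` has measure at most that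
of the set exploding at any `s ∈ (0, s₀]`; these sets are pairwise disjoint and uncountably many,
so they are null.
-/

open MeasureTheory Filter Topology intervalIntegral
open Set Real Function
open scoped ENNReal

section

variable {α : Type*} [MeasurableSpace α] {ν : Measure α}

lemma integrable_of_integrable_exp_mul {f : α → ℝ} {β : ℝ} (hβ : 0 < β)
    (hf : AEStronglyMeasurable f ν) (hf0 : ∀ x, 0 ≤ f x)
    (h : Integrable (fun x => exp (β * f x)) ν) : Integrable f ν := by
  refine (h.div_const β).mono' hf (ae_of_all _ fun x => ?_)
  rw [norm_of_nonneg (hf0 x), le_div_iff₀ hβ, mul_comm]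
  linarith [add_one_le_exp (β * f x)]

lemma integrable_and_integral_le_of_lintegral_ofReal_le {f g : α → ℝ}
    (hf : AEStronglyMeasurable f ν) (hf0 : 0 ≤ᵐ[ν] f) (hg : Integrable g ν) (hg0 : 0 ≤ᵐ[ν] g)
    (h : ∫⁻ x, ENNReal.ofReal (f x) ∂ν ≤ ∫⁻ x, ENNReal.ofReal (g x) ∂ν) :
    Integrable f ν ∧ ∫ x, f x ∂ν ≤ ∫ x, g x ∂ν := by
  refine ⟨⟨hf, (hasFiniteIntegral_iff_ofReal hf0).2 (h.trans_lt hg.lintegral_lt_top)⟩, ?_⟩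
  rw [integral_eq_lintegral_of_nonneg_ae hf0 hf, integral_eq_lintegral_of_nonneg_ae hg0 hg.1]
  exact ENNReal.toReal_mono hg.lintegral_lt_top.ne h

lemma tendsto_integral_sq_sub_of_dominated {ι : Type*} {l : Filter ι} [l.IsCountablyGenerated]
    {F : ι → α → ℝ} {f G : α → ℝ} (hF : ∀ᶠ i in l, AEStronglyMeasurable (F i) ν)
    (hf : AEStronglyMeasurable f ν) (hG : Integrable (fun x => G x ^ 2) ν)
    (hFG : ∀ᶠ i in l, ∀ᵐ x ∂ν, ‖F i x‖ ≤ G x) (hfG : ∀ᵐ x ∂ν, ‖f x‖ ≤ G x)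
    (hlim : ∀ᵐ x ∂ν, Tendsto (fun i => F i x) l (𝓝 (f x))) :
    Tendsto (fun i => ∫ x, (F i x - f x) ^ 2 ∂ν) l (𝓝 0) := by
  have hbound : ∀ᶠ i in l, ∀ᵐ x ∂ν, ‖(F i x - f x) ^ 2‖ ≤ 4 * G x ^ 2 := by
    filter_upwards [hFG] with i hi
    filter_upwards [hi, hfG] with x hFx hfx
    have hsub : ‖F i x - f x‖ ≤ 2 * G x := (norm_sub_le _ _).trans (by linarith)
    calc ‖(F i x - f x) ^ 2‖ = ‖F i x - f x‖ ^ 2 := norm_pow _ _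
      _ ≤ (2 * G x) ^ 2 := pow_le_pow_left₀ (norm_nonneg _) hsub 2
      _ = 4 * G x ^ 2 := by ring
  simpa using tendsto_integral_filter_of_dominated_convergence _
    (hF.mono fun i hi => (hi.sub hf).pow 2) hbound (hG.const_mul 4)
    (hlim.mono fun x hx => (hx.sub_const (f x)).pow 2)

end

lemma ofReal_exp_setIntegral_sq_le {w : ℝ → ℝ} (hw : Measurable w) (hw0 : ∀ t, 0 ≤ w t)
    {β : ℝ} (hβ : 0 < β) :
    ENNReal.ofReal (exp (∫ t in Ioc 0 (β / 2), w t) ^ 2) ≤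
      ENNReal.ofReal (2 / β) * ∫⁻ t in Ioc 0 (β / 2), ENNReal.ofReal (exp (β * w t)) := by
  set ν := volume.restrict (Ioc (0 : ℝ) (β / 2))
  by_cases hexp : Integrable (fun t => exp (β * w t)) ν
  swap
  · have htop : ∫⁻ t, ENNReal.ofReal (exp (β * w t)) ∂ν = ⊤ := by
      by_contra hne
      exact hexp ⟨(by fun_prop : Measurable fun t => exp (β * w t)).aestronglyMeasurable,
        (hasFiniteIntegral_iff_ofReal (ae_of_all _ fun t => (exp_pos _).le)).2
          (lt_top_iff_ne_top.2 hne)⟩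
    rw [htop, ENNReal.mul_top (by simpa using hβ)]
    exact le_top
  have hν : ν univ = ENNReal.ofReal (β / 2) := by simp [ν]
  have : NeZero ν := ⟨fun h => by simp [h] at hν; linarith⟩
  have hjensen := convexOn_exp.map_average_le continuousOn_exp isClosed_univ (by simp)
    ((integrable_of_integrable_exp_mul hβ hw.aestronglyMeasurable hw0 hexp).const_mul β) hexp
  rw [average_eq, average_eq, measureReal_def, hν, ENNReal.toReal_ofReal (by positivity),
    smul_eq_mul, smul_eq_mul, MeasureTheory.integral_const_mul] at hjensen
  rw [← ofReal_integral_eq_lintegral_ofReal hexp (ae_of_all _ fun t => (exp_pos _).le),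
    ← ENNReal.ofReal_mul (by positivity), ← exp_nat_mul]
  refine ENNReal.ofReal_le_ofReal (le_of_eq_of_le ?_ (hjensen.trans_eq ?_))
  · congr 1; field_simp; push_cast; ring
  · field_simp

def IsExplosionTime (g : ℝ → ℝ) (r : ℝ) : Prop :=
  (∀ s < r, IntegrableOn g (Ioc 0 s)) ∧ ∀ s, r < s → ¬IntegrableOn g (Ioc 0 s)

lemma IsExplosionTime.unique {g : ℝ → ℝ} {a b : ℝ} (ha : IsExplosionTime g a)
    (hb : IsExplosionTime g b) : a = b := by
  by_contra hne
  wlog hab : a < b generalizing a b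
  · exact this hb ha (Ne.symm hne) ((Ne.symm hne).lt_of_le (not_lt.1 hab))
  exact ha.2 _ (left_lt_add_div_two.2 hab) (hb.1 _ (add_div_two_lt_right.2 hab))

lemma integrableOn_Ioc_zero_add_iff {g : ℝ → ℝ} {u s : ℝ} (hu : 0 ≤ u) (hs : 0 ≤ s) :
    IntegrableOn g (Ioc 0 (u + s)) ↔
      IntegrableOn g (Ioc 0 u) ∧ IntegrableOn (fun t => g (t + u)) (Ioc 0 s) := by
  rw [← Ioc_union_Ioc_eq_Ioc hu (le_add_of_nonneg_right hs), integrableOn_union,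
    ← intervalIntegrable_iff_integrableOn_Ioc_of_le (le_add_of_nonneg_right hs),
    ← intervalIntegrable_iff_integrableOn_Ioc_of_le hs,
    IntervalIntegrable.comp_add_right_iff, zero_add, add_comm s]

lemma IsExplosionTime.comp_add {g : ℝ → ℝ} {r u : ℝ} (h : IsExplosionTime g r)
    (hu : 0 ≤ u) (hur : u < r) : IsExplosionTime (fun t => g (t + u)) (r - u) := by
  have hgu : IntegrableOn g (Ioc 0 u) := h.1 u hur
  refine ⟨fun s hs => ?_, fun s hs hgs => ?_⟩
  · rcases le_or_gt s 0 with hs0 | hs0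
    · simp [Ioc_eq_empty hs0.not_gt]
    · exact ((integrableOn_Ioc_zero_add_iff hu hs0.le).1 (h.1 _ (by linarith))).2
  · exact h.2 (u + s) (by linarith)
      ((integrableOn_Ioc_zero_add_iff hu (by linarith)).2 ⟨hgu, hgs⟩)

lemma isExplosionTime_iff_rat {g : ℝ → ℝ} {r : ℝ} :
    IsExplosionTime g r ↔ (∀ q : ℚ, (q : ℝ) < r → IntegrableOn g (Ioc 0 q)) ∧
      ∀ q : ℚ, r < q → ¬IntegrableOn g (Ioc 0 q) := by
  refine ⟨fun h => ⟨fun q hq => h.1 q hq, fun q hq => h.2 q hq⟩, fun ⟨h₁, h₂⟩ => ⟨?_, ?_⟩⟩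
  · intro s hs
    obtain ⟨q, hsq, hqr⟩ := exists_rat_btwn hs
    exact (h₁ q hqr).mono_set (Ioc_subset_Ioc_right hsq.le)
  · intro s hs hgs
    obtain ⟨q, hrq, hqs⟩ := exists_rat_btwn hs
    exact h₂ q hrq (hgs.mono_set (Ioc_subset_Ioc_right hqs.le))

lemma continuousWithinAt_primitive_of_not_isExplosionTime {g : ℝ → ℝ} {s₀ : ℝ} (hs₀ : 0 ≤ s₀)
    (h : s₀ = 0 ∨ ¬IsExplosionTime g s₀) :
    ContinuousWithinAt (fun s => ∫ t in 0..s, g t) (Ici 0) s₀ := by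
  by_cases hright : ∃ s₂, s₀ < s₂ ∧ IntegrableOn g (Ioc 0 s₂)
  · obtain ⟨s₂, hs₂, hg⟩ := hright
    have hcont := continuousOn_primitive_interval
      ((integrableOn_Icc_iff_integrableOn_Ioc (by simp)).2 hg |>.mono_set
        (by rw [uIcc_of_le (hs₀.trans hs₂.le)]))
    rw [uIcc_of_le (hs₀.trans hs₂.le)] at hcont
    refine (hcont s₀ ⟨hs₀, hs₂.le⟩).mono_of_mem_nhdsWithin ?_
    exact mem_nhdsWithin.2 ⟨Iio s₂, isOpen_Iio, hs₂, fun s ⟨hs, hs'⟩ => ⟨hs', le_of_lt hs⟩⟩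
  push Not at hright
  -- past a point of non-integrability the integral takes its junk value `0`
  have hzero : ∀ {s₁}, 0 ≤ s₁ → ¬IntegrableOn g (Ioc 0 s₁) → ∀ s, s₁ ≤ s →
      ∫ t in 0..s, g t = 0 := fun hs₁ hg s hs => by
    rw [integral_of_le (hs₁.trans hs)]
    exact integral_undef fun h' => hg (IntegrableOn.mono_set h' (Ioc_subset_Ioc_right hs))
  rcases h with rfl | hnot
  · refine (continuousWithinAt_const (b := (0:ℝ))).congr (fun s hs => ?_) (by simp)
    rcases (mem_Ici.1 hs).eq_or_lt with rfl | hs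
    · simp
    · exact hzero hs.le (hright s hs) s le_rfl
  obtain ⟨s₁, hs₁s₀, hg⟩ : ∃ s₁ < s₀, ¬IntegrableOn g (Ioc 0 s₁) := by
    by_contra! hleft
    exact hnot ⟨hleft, hright⟩
  have hs₁ : 0 < s₁ := by
    by_contra! hs₁
    exact hg (by simp [Ioc_eq_empty hs₁.not_gt])
  refine ((continuousAt_const (y := (0:ℝ))).congr ?_).continuousWithinAt
  filter_upwards [Ici_mem_nhds hs₁s₀] with s hs
  exact (hzero hs₁.le hg s hs).symm

lemma exp_neg_intervalIntegral_le_exp_negPart {g : ℝ → ℝ} {c s : ℝ} (hs : s ∈ Icc 0 c)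
    (hg : IntegrableOn (fun t => max (-g t) 0) (Ioc 0 c)) :
    exp (-∫ t in 0..s, g t) ≤ exp (∫ t in Ioc 0 c, max (-g t) 0) := by
  rw [integral_of_le hs.1]
  by_cases hI : IntegrableOn g (Ioc 0 s)
  · refine exp_le_exp.2 ?_
    calc -∫ t in Ioc 0 s, g t = ∫ t in Ioc 0 s, -g t := (integral_neg _).symm
      _ ≤ ∫ t in Ioc 0 s, max (-g t) 0 :=
        integral_mono hI.neg (hg.mono_set (Ioc_subset_Ioc_right hs.2)) fun t => le_max_left _ _
      _ ≤ ∫ t in Ioc 0 c, max (-g t) 0 :=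
        setIntegral_mono_set hg (ae_of_all _ fun t => le_max_right _ _)
          (Ioc_subset_Ioc_right hs.2).eventuallyLE
  · rw [integral_undef hI, neg_zero, exp_zero]
    exact one_le_exp (setIntegral_nonneg measurableSet_Ioc fun t _ => le_max_right _ _)

section Flow

variable {Q : Type*} [MeasurableSpace Q] {μ : Measure Q} {T : ℝ → Q → Q} {V : Q → ℝ}

lemma stronglyMeasurable_intervalIntegral_comp
    (hVT : Measurable (uncurry fun (t : ℝ) (ω : Q) => V (T t ω))) (a b : ℝ) :
    StronglyMeasurable fun ω => ∫ t in a..b, V (T t ω) :=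
  hVT.stronglyMeasurable.integral_prod_left.sub hVT.stronglyMeasurable.integral_prod_left

lemma measurableSet_setOf_isExplosionTime
    (hVT : Measurable (uncurry fun (t : ℝ) (ω : Q) => V (T t ω))) (r : ℝ) :
    MeasurableSet {ω | IsExplosionTime (fun t => V (T t ω)) r} := by
  have hI : ∀ s : ℝ, Measurable fun ω => IntegrableOn (fun t => V (T t ω)) (Ioc 0 s) :=
    fun s => (measurableSet_integrable (μ := volume.restrict (Ioc 0 s))
      (f := fun ω t => V (T t ω))
      (hVT.comp measurable_swap).stronglyMeasurable).mem
  simp_rw [isExplosionTime_iff_rat]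
  exact Measurable.setOf (by fun_prop)

lemma ae_not_isExplosionTime [SFinite μ] (hTgroup : ∀ s t : ℝ, T (s + t) = T s ∘ T t)
    (hTmp : ∀ t : ℝ, MeasurePreserving (T t) μ μ)
    (hVT : Measurable (uncurry fun (t : ℝ) (ω : Q) => V (T t ω))) {r : ℝ} (hr : 0 < r) :
    ∀ᵐ ω ∂μ, ¬IsExplosionTime (fun t => V (T t ω)) r := by
  set E : ℝ → Set Q := fun s => {ω | IsExplosionTime (fun t => V (T t ω)) s}
  have hE : ∀ s, MeasurableSet (E s) := measurableSet_setOf_isExplosionTime hVT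
  have hflow : ∀ s ∈ Ioc 0 r, μ (E r) ≤ μ (E s) := by
    intro s ⟨hs, hsr⟩
    have hsub : E r ⊆ T (r - s) ⁻¹' E s := fun ω hω => by
      simpa [E, hTgroup] using hω.comp_add (u := r - s) (by linarith) (by linarith)
    exact (measure_mono hsub).trans_eq ((hTmp _).measure_preimage (hE s).nullMeasurableSet)
  have hcount : {s | 0 < μ (E s)}.Countable :=
    Measure.countable_meas_pos_of_disjoint_iUnion hE fun a b hab =>
      disjoint_left.2 fun ω ha hb => hab (IsExplosionTime.unique ha hb)
  refine measure_eq_zero_iff_ae_notMem.1 (nonpos_iff_eq_zero.1 (not_lt.1 fun hpos => ?_))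
  have := hcount.mono fun s hs => hpos.trans_le (hflow s hs)
  exact hr.not_ge (Cardinal.Real.Ioc_countable_iff.1 this)

lemma ae_continuousWithinAt_exp_neg_intervalIntegral [SFinite μ]
    (hTgroup : ∀ s t : ℝ, T (s + t) = T s ∘ T t) (hTmp : ∀ t : ℝ, MeasurePreserving (T t) μ μ)
    (hVT : Measurable (uncurry fun (t : ℝ) (ω : Q) => V (T t ω))) {s₀ : ℝ} (hs₀ : 0 ≤ s₀) :
    ∀ᵐ ω ∂μ, ContinuousWithinAt (fun s => exp (-∫ t in 0..s, V (T t ω))) (Ici 0) s₀ := by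
  have h : ∀ᵐ ω ∂μ, s₀ = 0 ∨ ¬IsExplosionTime (fun t => V (T t ω)) s₀ := by
    rcases hs₀.eq_or_lt with h | h
    · exact ae_of_all _ fun _ => Or.inl h.symm
    · exact (ae_not_isExplosionTime hTgroup hTmp hVT h).mono fun _ => Or.inr
  filter_upwards [h] with ω hω
  exact (continuous_exp.comp continuous_neg).continuousAt.comp_continuousWithinAt
    (continuousWithinAt_primitive_of_not_isExplosionTime hs₀ hω)

lemma lintegral_setLIntegral_Ioc_comp [SFinite μ] (hTmp : ∀ t : ℝ, MeasurePreserving (T t) μ μ)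
    {h : Q → ℝ≥0∞} (hh : Measurable h) (hhT : Measurable (uncurry fun (t : ℝ) (ω : Q) => h (T t ω)))
    (a b : ℝ) :
    ∫⁻ ω, (∫⁻ t in Ioc a b, h (T t ω)) ∂μ = ENNReal.ofReal (b - a) * ∫⁻ ω, h ω ∂μ := by
  rw [lintegral_lintegral_swap (f := fun ω t => h (T t ω)) (hhT.comp measurable_swap).aemeasurable]
  simp_rw [(hTmp _).lintegral_comp hh]
  rw [setLIntegral_const, Real.volume_Ioc, mul_comm]

lemma ae_integrableOn_Ioc_comp [SFinite μ] (hTmp : ∀ t : ℝ, MeasurePreserving (T t) μ μ)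
    {h : Q → ℝ} (hh : Measurable h) (hint : Integrable h μ)
    (hhT : Measurable (uncurry fun (t : ℝ) (ω : Q) => h (T t ω))) (a b : ℝ) :
    ∀ᵐ ω ∂μ, IntegrableOn (fun t => h (T t ω)) (Ioc a b) := by
  have hfin : ∫⁻ ω, (∫⁻ t in Ioc a b, ‖h (T t ω)‖ₑ) ∂μ < ⊤ := by
    rw [lintegral_setLIntegral_Ioc_comp hTmp hh.enorm hhT.enorm]
    exact ENNReal.mul_lt_top ENNReal.ofReal_lt_top hint.2
  filter_upwards [ae_lt_top (hhT.enorm.lintegral_prod_left) hfin.ne] with ω hω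
  exact ⟨(hhT.comp measurable_prodMk_right).aestronglyMeasurable, hω⟩

noncomputable def kernelMajorant (T : ℝ → Q → Q) (V : Q → ℝ) (c : ℝ) (ω : Q) : ℝ :=
  exp (∫ t in Ioc 0 c, max (-V (T t ω)) 0)

lemma measurable_kernelMajorant (hVT : Measurable (uncurry fun (t : ℝ) (ω : Q) => V (T t ω)))
    (c : ℝ) : Measurable (kernelMajorant T V c) :=
  continuous_exp.measurable.comp
    (StronglyMeasurable.integral_prod_left (f := fun t ω => max (-V (T t ω)) 0)
      (hVT.neg.max measurable_const).stronglyMeasurable).measurable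

lemma ae_exp_neg_intervalIntegral_le_kernelMajorant [SFinite μ]
    (hTmp : ∀ t : ℝ, MeasurePreserving (T t) μ μ) (hVmeas : Measurable V)
    (hVT : Measurable (uncurry fun (t : ℝ) (ω : Q) => V (T t ω)))
    (hW : Integrable (fun ω => max (-V ω) 0) μ) (c : ℝ) :
    ∀ᵐ ω ∂μ, ∀ s ∈ Icc 0 c, exp (-∫ t in 0..s, V (T t ω)) ≤ kernelMajorant T V c ω := by
  filter_upwards [ae_integrableOn_Ioc_comp hTmp (hVmeas.neg.max measurable_const) hW
    (hVT.neg.max measurable_const) 0 c] with ω hω s hs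
  exact exp_neg_intervalIntegral_le_exp_negPart hs hω

lemma lintegral_ofReal_kernelMajorant_sq_le [SFinite μ]
    (hTmp : ∀ t : ℝ, MeasurePreserving (T t) μ μ) (hVmeas : Measurable V)
    (hVT : Measurable (uncurry fun (t : ℝ) (ω : Q) => V (T t ω))) {β : ℝ} (hβ : 0 < β) :
    ∫⁻ ω, ENNReal.ofReal (kernelMajorant T V (β / 2) ω ^ 2) ∂μ ≤
      ∫⁻ ω, ENNReal.ofReal (exp (β * max (-V ω) 0)) ∂μ := by
  have hW : Measurable (uncurry fun (t : ℝ) (ω : Q) => max (-V (T t ω)) 0) :=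
    hVT.neg.max measurable_const
  calc ∫⁻ ω, ENNReal.ofReal (kernelMajorant T V (β / 2) ω ^ 2) ∂μ
      ≤ ∫⁻ ω, ENNReal.ofReal (2 / β) *
          (∫⁻ t in Ioc 0 (β / 2), ENNReal.ofReal (exp (β * max (-V (T t ω)) 0))) ∂μ :=
        lintegral_mono fun ω => ofReal_exp_setIntegral_sq_le
          (hW.comp measurable_prodMk_right) (fun _ => le_max_right _ _) hβ
    _ = ENNReal.ofReal (2 / β) * ENNReal.ofReal (β / 2 - 0) *
          ∫⁻ ω, ENNReal.ofReal (exp (β * max (-V ω) 0)) ∂μ := by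
        rw [lintegral_const_mul' _ _ ENNReal.ofReal_ne_top, mul_assoc,
          lintegral_setLIntegral_Ioc_comp (h := fun ω => ENNReal.ofReal (exp (β * max (-V ω) 0)))
            hTmp (by fun_prop) (by fun_prop)]
    _ = ∫⁻ ω, ENNReal.ofReal (exp (β * max (-V ω) 0)) ∂μ := by
        rw [← ENNReal.ofReal_mul (by positivity), sub_zero, div_mul_div_cancel₀ hβ.ne',
          div_self two_ne_zero, ENNReal.ofReal_one, one_mul]

end Flow

theorem fkn_kernel_L2_general
    {Q : Type*} [MeasurableSpace Q] (μ : Measure Q) [IsProbabilityMeasure μ]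
    (β : ℝ) (hβ : 0 < β)
    -- the measure-preserving flow implementing the automorphism group U(t)
    (T : ℝ → Q → Q)
    (hTgroup : ∀ s t : ℝ, T (s + t) = T s ∘ T t)
    (hTmp : ∀ t : ℝ, MeasurePreserving (T t) μ μ)
    -- the interaction V
    (V : Q → ℝ) (hVmeas : Measurable V)
    (hVT : Measurable (Function.uncurry fun (t : ℝ) (ω : Q) => V (T t ω)))
    (hexpneg : Integrable (fun ω => Real.exp (β * max (-V ω) 0)) μ)
    -- the FKN kernel
    (F : ℝ → Q → ℝ)
    (hF : ∀ (s : ℝ) (ω : Q), F s ω = Real.exp (-∫ t in (0:ℝ)..s, V (T t ω))) :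
    (∀ s ∈ Set.Icc (0:ℝ) (β / 2),
      MemLp (F s) 2 μ ∧
      ∫ ω, (F s ω) ^ 2 ∂μ ≤ ∫ ω, Real.exp (β * max (-V ω) 0) ∂μ) ∧
    (∀ s₀ ∈ Set.Icc (0:ℝ) (β / 2),
      Tendsto (fun s => ∫ ω, (F s ω - F s₀ ω) ^ 2 ∂μ)
        (𝓝[Set.Icc (0:ℝ) (β / 2)] s₀) (𝓝 0)) := by
  obtain rfl : F = fun s ω => exp (-∫ t in 0..s, V (T t ω)) := funext₂ hF
  set G := kernelMajorant T V (β / 2)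
  have hW : Integrable (fun ω => max (-V ω) 0) μ :=
    integrable_of_integrable_exp_mul hβ (by fun_prop) (fun _ => le_max_right _ _) hexpneg
  have hGmeas := measurable_kernelMajorant hVT (β / 2)
  obtain ⟨hG2, hG2le⟩ := integrable_and_integral_le_of_lintegral_ofReal_le
    (hGmeas.pow_const 2).aestronglyMeasurable
    (ae_of_all _ fun _ => sq_nonneg _) hexpneg (ae_of_all _ fun _ => (exp_pos _).le)
    (lintegral_ofReal_kernelMajorant_sq_le hTmp hVmeas hVT hβ)
  have hGmem : MemLp G 2 μ := (memLp_two_iff_integrable_sq hGmeas.aestronglyMeasurable).2 hG2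
  have hFmeas : ∀ s, AEStronglyMeasurable (fun ω => exp (-∫ t in 0..s, V (T t ω))) μ := fun s =>
    (continuous_exp.comp_stronglyMeasurable
      (stronglyMeasurable_intervalIntegral_comp hVT 0 s).neg).aestronglyMeasurable
  have hFG : ∀ᵐ ω ∂μ, ∀ s ∈ Icc 0 (β / 2), ‖exp (-∫ t in 0..s, V (T t ω))‖ ≤ G ω := by
    filter_upwards [ae_exp_neg_intervalIntegral_le_kernelMajorant hTmp hVmeas hVT hW _]
      with ω hω s hs
    rw [norm_of_nonneg (exp_pos _).le]
    exact hω s hs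
  have hFmem : ∀ s ∈ Icc 0 (β / 2), MemLp (fun ω => exp (-∫ t in 0..s, V (T t ω))) 2 μ :=
    fun s hs => hGmem.of_le (hFmeas s) (hFG.mono fun ω h => (h s hs).trans (le_abs_self _))
  refine ⟨fun s hs => ⟨hFmem s hs, ?_⟩, fun s₀ hs₀ => ?_⟩
  · refine (integral_mono_ae (hFmem s hs).integrable_sq hG2 ?_).trans hG2le
    filter_upwards [hFG] with ω hω
    exact sq_le_sq.2 ((hω s hs).trans (le_abs_self _))
  · exact tendsto_integral_sq_sub_of_dominated (.of_forall hFmeas) (hFmeas s₀) hG2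
      (eventually_nhdsWithin_of_forall fun s hs => hFG.mono fun ω h => h s hs)
      (hFG.mono fun ω h => h s₀ hs₀)
      ((ae_continuousWithinAt_exp_neg_intervalIntegral hTgroup hTmp hVT hs₀.1).mono
        fun ω h => (h.mono Icc_subset_Ici_self).tendsto)

/-- For a measure-preserving flow `T` on a probability space and a real
measurable `V` with `e^{-βV} ∈ L¹` and `e^{βV₋} ∈ L¹`, the Feynman–Kac–Nelson kernel
`F_{[0,s]} = e^{-∫₀^s V∘T_t dt}` lies in `L²` for `0 ≤ s ≤ β/2` with
`‖F_{[0,s]}‖₂² ≤ ‖e^{βV₋}‖₁`, and `s ↦ F_{[0,s]}` is continuous in `L²`. -/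
theorem fkn_kernel_L2
    {Q : Type*} [MeasurableSpace Q] (μ : Measure Q) [IsProbabilityMeasure μ]
    (β : ℝ) (hβ : 0 < β)
    -- the measure-preserving flow implementing the automorphism group U(t)
    (T : ℝ → Q → Q)
    (hT0 : T 0 = id)
    (hTgroup : ∀ s t : ℝ, T (s + t) = T s ∘ T t)
    (hTmp : ∀ t : ℝ, MeasurePreserving (T t) μ μ)
    -- the interaction V
    (V : Q → ℝ) (hVmeas : Measurable V)
    (hVT : Measurable (Function.uncurry fun (t : ℝ) (ω : Q) => V (T t ω)))
    (hexp : Integrable (fun ω => Real.exp (-β * V ω)) μ)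
    (hexpneg : Integrable (fun ω => Real.exp (β * max (-V ω) 0)) μ)
    -- the Klein–Landau bound ‖e^{-∫_a^b U(t)V dt}‖_p ≤ ‖e^{-(b-a)V}‖_p
    (hKL : ∀ p : ℝ, 1 ≤ p → ∀ a b : ℝ, a ≤ b →
      ∫ ω, Real.exp (-p * ∫ t in a..b, V (T t ω)) ∂μ
        ≤ ∫ ω, Real.exp (-p * ((b - a) * V ω)) ∂μ)
    -- the FKN kernel
    (F : ℝ → Q → ℝ)
    (hF : ∀ (s : ℝ) (ω : Q), F s ω = Real.exp (-∫ t in (0:ℝ)..s, V (T t ω))) :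
    (∀ s ∈ Set.Icc (0:ℝ) (β / 2),
      MemLp (F s) 2 μ ∧
      ∫ ω, (F s ω) ^ 2 ∂μ ≤ ∫ ω, Real.exp (β * max (-V ω) 0) ∂μ) ∧
    (∀ s₀ ∈ Set.Icc (0:ℝ) (β / 2),
      Tendsto (fun s => ∫ ω, (F s ω - F s₀ ω) ^ 2 ∂μ)
        (𝓝[Set.Icc (0:ℝ) (β / 2)] s₀) (𝓝 0)) :=
  fkn_kernel_L2_general μ β hβ T hTgroup hTmp V hVmeas hVT hexpneg F hF
end

section
/- (Energy-space Kähler structure for the Klein–Gordon field) Let 𝔥 be a complex Hilbert space with conjugation, ε ≥ m > 0 a real selfadjoint operator on 𝔥, and E = 𝔥₁ ⊕ 𝔥 the energy space of Cauchy data with charge form q(g,f) = i(g₁,f₂) - i(g₂,f₁) and charge complex structure j = i ⊕ i. With U₀ = 2^{-1/2}[[ε, i],[ε, -i]], L = [[0, i],[-iε², 0]], and energy complex structure 𝐢 := j L/|L|, the form (g,f) := Im q(g, 𝐢 f) + i Im q(g,f) satisfies, for U₀f = (u₁,u₂) and U₀g = (v₁,v₂): (g,f) = (v₁, ε⁻¹u₁)_𝔥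 + conj((v₂, ε⁻¹u₂)_𝔥). In particular (·,·) is a positive definite sesquilinear form on (E, 𝐢), so (E, j, 𝐢, q) is a charged Kähler space. -/
open Complex
open scoped ComplexInnerProductSpace

/-- On the energy space `E = 𝔥 × 𝔥` of Cauchy data for the abstract
Klein–Gordon equation, with charge form `q(g,f) = i(g₁,f₂) - i(g₂,f₁)`, charge complex
structure `j = i ⊕ i`, diagonalization `U₀`, and energy complex structure `𝐢 = j L/|L|`,
the form `(g,f) = Im q(g, 𝐢 f) + i Im q(g,f)` satisfies
`(g,f) = (v₁, ε⁻¹ u₁) + conj (v₂, ε⁻¹ u₂)` where `U₀ f = (u₁,u₂)`, `U₀ g = (v₁,v₂)`;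
in particular it is a positive definite sesquilinear form on `(E, 𝐢)`, so `(E, j, 𝐢, q)`
is a charged Kähler space. -/
theorem energy_space_charged_kaehler
    {𝔥 : Type*} [NormedAddCommGroup 𝔥] [InnerProductSpace ℂ 𝔥] [CompleteSpace 𝔥]
    (m : ℝ) (hm : 0 < m)
    (ε εinv : 𝔥 →L[ℂ] 𝔥)
    (hε : IsSelfAdjoint ε)
    (hbound : ∀ u : 𝔥, m * ‖u‖ ^ 2 ≤ (⟪u, ε u⟫).re)
    (hinv₁ : ε * εinv = 1) (hinv₂ : εinv * ε = 1)
    -- ε is real: it commutes with a conjugation c on 𝔥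
    (c : 𝔥 → 𝔥)
    (hcadd : ∀ u v : 𝔥, c (u + v) = c u + c v)
    (hcsmul : ∀ (z : ℂ) (u : 𝔥), c (z • u) = (starRingEnd ℂ) z • c u)
    (hcinv : ∀ u : 𝔥, c (c u) = u)
    (hcinner : ∀ u v : 𝔥, ⟪c u, c v⟫ = (starRingEnd ℂ) ⟪u, v⟫)
    (hεreal : ∀ u : 𝔥, c (ε u) = ε (c u))
    -- the diagonalizing map U₀ and its inverse
    (U0 U0inv : 𝔥 × 𝔥 → 𝔥 × 𝔥)
    (hU0 : ∀ f : 𝔥 × 𝔥, U0 f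
      = ((Real.sqrt 2)⁻¹ • (ε f.1 + Complex.I • f.2),
         (Real.sqrt 2)⁻¹ • (ε f.1 - Complex.I • f.2)))
    (hU0inv : ∀ u : 𝔥 × 𝔥, U0inv u
      = ((Real.sqrt 2)⁻¹ • (εinv u.1 + εinv u.2),
         (Real.sqrt 2)⁻¹ • (Complex.I • u.2 - Complex.I • u.1)))
    -- the energy complex structure 𝐢 = j L/|L| = j ∘ U₀⁻¹ (1 ⊕ -1) U₀
    (ci : 𝔥 × 𝔥 → 𝔥 × 𝔥)
    (hci : ∀ f : 𝔥 × 𝔥, ci f = Complex.I • U0inv ((U0 f).1, -(U0 f).2))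
    -- the charge form q
    (qf : 𝔥 × 𝔥 → 𝔥 × 𝔥 → ℂ)
    (hqf : ∀ g f : 𝔥 × 𝔥, qf g f = Complex.I * ⟪g.1, f.2⟫ - Complex.I * ⟪g.2, f.1⟫)
    -- the candidate inner product
    (P : 𝔥 × 𝔥 → 𝔥 × 𝔥 → ℂ)
    (hP : ∀ g f : 𝔥 × 𝔥, P g f = ((qf g (ci f)).im : ℂ) + Complex.I * ((qf g f).im : ℂ)) :
    -- the explicit formula after diagonalization
    (∀ g f : 𝔥 × 𝔥,
      P g f = ⟪(U0 g).1, εinv ((U0 f).1)⟫ + (starRingEnd ℂ) ⟪(U0 g).2, εinv ((U0 f).2)⟫) ∧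
    -- (·,·) is a positive definite Hermitian sesquilinear form on (E, 𝐢)
    (∀ g f₁ f₂ : 𝔥 × 𝔥, P g (f₁ + f₂) = P g f₁ + P g f₂) ∧
    (∀ (g f : 𝔥 × 𝔥) (a b : ℝ),
      P g (a • f + b • ci f) = ((a : ℂ) + (b : ℂ) * Complex.I) * P g f) ∧
    (∀ g f : 𝔥 × 𝔥, P f g = (starRingEnd ℂ) (P g f)) ∧
    (∀ f : 𝔥 × 𝔥, f ≠ 0 → 0 < (P f f).re ∧ (P f f).im = 0) := by
  -- basic consequences of the hypotheses
  have hs : ((Real.sqrt 2)⁻¹ * (Real.sqrt 2)⁻¹ : ℝ) = 2⁻¹ := by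
    rw [← mul_inv]; norm_num [Real.mul_self_sqrt]
  have hEinvE : ∀ x, εinv (ε x) = x := fun x => by
    have := congrArg (fun T : 𝔥 →L[ℂ] 𝔥 => T x) hinv₂; simpa using this
  have hEEinv : ∀ x, ε (εinv x) = x := fun x => by
    have := congrArg (fun T : 𝔥 →L[ℂ] 𝔥 => T x) hinv₁; simpa using this
  have hsa : ∀ x y : 𝔥, ⟪ε x, y⟫ = ⟪x, ε y⟫ := fun x y => by
    rw [← ContinuousLinearMap.adjoint_inner_left, hε.adjoint_eq]
  have hsainv : ∀ x y : 𝔥, ⟪εinv x, y⟫ = ⟪x, εinv y⟫ := fun x y => by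
    conv_lhs => rw [← hEEinv y]
    rw [← hsa, hEEinv]
  have hswap : ∀ x y : 𝔥, (⟪x, y⟫ : ℂ).re = (⟪y, x⟫ : ℂ).re := fun x y => by
    rw [← inner_conj_symm y x]; exact Complex.conj_re _
  -- the explicit form of the energy complex structure
  have hciF : ∀ f : 𝔥 × 𝔥, ci f = (-(εinv f.2), ε f.1) := by
    intro f
    rw [hci, hU0inv, hU0]
    simp only [map_add, map_sub, map_neg, ContinuousLinearMap.map_smul_of_tower,
      map_smul, hEinvE, Prod.smul_mk, Prod.mk.injEq]
    constructor <;>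
    · match_scalars <;> push_cast <;> ring_nf <;>
        norm_num [← Complex.ofReal_pow, Real.sq_sqrt]
  -- the explicit real/imaginary form of `P`
  have hPF : ∀ g f : 𝔥 × 𝔥,
      P g f = (((⟪g.1, ε f.1⟫).re + (⟪g.2, εinv f.2⟫).re : ℝ) : ℂ)
        + Complex.I * (((⟪g.1, f.2⟫).re - (⟪g.2, f.1⟫).re : ℝ) : ℂ) := by
    intro g f
    rw [hP, hqf, hqf, hciF]
    simp [inner_neg_right]
  refine ⟨?_, ?_, ?_, ?_, ?_⟩
  · -- the explicit formula after diagonalization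
    intro g f
    rw [hPF, hU0 g, hU0 f]
    simp only [map_add, map_sub, ContinuousLinearMap.map_smul_of_tower, map_smul, hEinvE]
    simp only [← Complex.coe_smul, inner_smul_left, inner_smul_right, Complex.conj_ofReal]
    simp only [inner_add_left, inner_add_right, inner_sub_left, inner_sub_right,
      inner_smul_left, inner_smul_right, hsa, hEEinv, Complex.conj_I]
    set z1 := (⟪g.1, ε f.1⟫ : ℂ)
    set z2 := (⟪g.2, εinv f.2⟫ : ℂ)
    set w1 := (⟪g.1, f.2⟫ : ℂ)
    set w2 := (⟪g.2, f.1⟫ : ℂ)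
    have e2 : ((((Real.sqrt 2)⁻¹ : ℝ)) : ℂ) * ((((Real.sqrt 2)⁻¹ : ℝ)) : ℂ) = 2⁻¹ := by
      rw [← Complex.ofReal_mul, hs]; norm_num
    simp only [← mul_assoc, e2]
    apply Complex.ext <;>
      simp only [Complex.add_re, Complex.add_im, Complex.sub_re, Complex.sub_im,
        Complex.mul_re, Complex.mul_im, Complex.neg_re, Complex.neg_im,
        Complex.I_re, Complex.I_im, Complex.ofReal_re, Complex.ofReal_im,
        Complex.conj_re, Complex.conj_im, Complex.inv_re, Complex.inv_im] <;>
      norm_num <;> ring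
  · -- additivity in the second argument
    intro g f₁ f₂
    simp only [hPF, Prod.fst_add, Prod.snd_add, map_add, inner_add_right]
    apply Complex.ext <;> simp <;> ring
  · -- ℂ-linearity w.r.t. the complex structure 𝐢
    intro g f a b
    rw [hPF, hPF, hciF]
    simp only [Prod.fst_add, Prod.snd_add, Prod.smul_fst, Prod.smul_snd,
      Prod.fst_neg, Prod.snd_neg, smul_neg, map_add, map_neg,
      ContinuousLinearMap.map_smul_of_tower, hEinvE, hEEinv,
      inner_add_right, inner_neg_right]
    simp only [← Complex.coe_smul, inner_smul_right]
    apply Complex.ext <;>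
      simp only [Complex.add_re, Complex.add_im, Complex.sub_re, Complex.sub_im,
        Complex.mul_re, Complex.mul_im, Complex.neg_re, Complex.neg_im,
        Complex.I_re, Complex.I_im, Complex.ofReal_re, Complex.ofReal_im] <;>
      push_cast <;> ring
  · -- hermitian symmetry
    intro g f
    rw [hPF, hPF]
    have h1 : (⟪f.1, ε g.1⟫ : ℂ).re = (⟪g.1, ε f.1⟫ : ℂ).re := by
      rw [← hsa, hswap]
    have h2 : (⟪f.2, εinv g.2⟫ : ℂ).re = (⟪g.2, εinv f.2⟫ : ℂ).re := by
      rw [← hsainv, hswap]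
    apply Complex.ext <;>
      simp [h1, h2, hswap f.1 g.2, hswap f.2 g.1] <;> ring
  · -- positive definiteness
    intro f hf
    rw [hPF]
    constructor
    · have hb1 : m * ‖f.1‖ ^ 2 ≤ (⟪f.1, ε f.1⟫).re := hbound f.1
      have hb2 : m * ‖εinv f.2‖ ^ 2 ≤ (⟪f.2, εinv f.2⟫).re := by
        have := hbound (εinv f.2)
        calc m * ‖εinv f.2‖ ^ 2 ≤ (⟪εinv f.2, ε (εinv f.2)⟫).re := this
          _ = (⟪f.2, εinv f.2⟫).re := by rw [← hsa, hEEinv, hswap]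
      have hcases : f.1 ≠ 0 ∨ f.2 ≠ 0 := by
        by_contra h
        push_neg at h
        exact hf (Prod.ext h.1 h.2)
      have hge1 : (0:ℝ) ≤ (⟪f.1, ε f.1⟫).re := le_trans (by positivity) hb1
      have hge2 : (0:ℝ) ≤ (⟪f.2, εinv f.2⟫).re := le_trans (by positivity) hb2
      have hpos : 0 < (⟪f.1, ε f.1⟫).re + (⟪f.2, εinv f.2⟫).re := by
        rcases hcases with h1 | h2
        · have : 0 < m * ‖f.1‖ ^ 2 := by
            have : 0 < ‖f.1‖ := norm_pos_iff.mpr h1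
            positivity
          linarith
        · have hne : εinv f.2 ≠ 0 := by
            intro h0
            apply h2
            rw [← hEEinv f.2, h0, map_zero]
          have : 0 < m * ‖εinv f.2‖ ^ 2 := by
            have : 0 < ‖εinv f.2‖ := norm_pos_iff.mpr hne
            positivity
          linarith
      simpa using hpos
    · simp [hswap f.1 f.2]
end
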